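/- arXiv:2308.14222 — 5 statements merged into one kernel-verified Lean document; each statement's English description precedes it below -/
import Mathlib

section
/- Let A be a Hermitian 2×2 complex matrix with a₂₁ ≠ 0, let α be a real number with e^{iα} = a₂₁/|a₂₁|, and let φ ∈ [−π/4, π/4] satisfy 2|a₂₁|·cos(2φ) = (a₁₁ − a₂₂)·sin(2φ). Then both off-diagonal entries of U(φ,α)* · A · U(φ,α) are zero. -/
open Matrix Real Complex

/-!
With `D = diag(1, e^{iα})` one has `U(φ, α) = D U(φ, 0) Dᴴ`, and the choice of `α` makes
`Dᴴ A D` the real symmetric matrix `[[a₁₁, |a₂₁|], [|a₂₁|, a₂₂]]`. So the (1,2) entry of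
`U(φ, α)ᴴ A U(φ, α)` is a phase times the (1,2) entry of the real Jacobi rotation of that matrix,
`|a₂₁| cos 2φ - (a₁₁ - a₂₂)/2 · sin 2φ`, which the hypothesis on `φ` makes zero. The (2,1) entry
is its conjugate, since `U(φ, α)ᴴ A U(φ, α)` is Hermitian.
-/

/-- The complex Jacobi rotation `U(φ, α)` of order two. -/
noncomputable def jacobiRotation (φ α : ℝ) : Matrix (Fin 2) (Fin 2) ℂ :=
  !![(Real.cos φ : ℂ), -(Complex.exp (-(α : ℂ) * Complex.I) * (Real.sin φ : ℂ));
     Complex.exp ((α : ℂ) * Complex.I) * (Real.sin φ : ℂ), (Real.cos φ : ℂ)]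

theorem conjTranspose_conj_mul_mul_conj {n R : Type*} [Fintype n] [Semiring R] [StarRing R]
    (P Q A : Matrix n n R) :
    (P * Q * Pᴴ)ᴴ * A * (P * Q * Pᴴ) = P * (Qᴴ * (Pᴴ * A * P) * Q) * Pᴴ := by
  simp only [conjTranspose_mul, conjTranspose_conjTranspose, Matrix.mul_assoc]

theorem Complex.ofReal_norm_mul_div_norm (z : ℂ) : (‖z‖ : ℂ) * (z / ‖z‖) = z := by
  rcases eq_or_ne z 0 with rfl | hz
  · simp
  · exact mul_div_cancel₀ z (by simpa using hz)

theorem Complex.conj_exp_ofReal_mul_I (α : ℝ) :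
    starRingEnd ℂ (exp (α * I)) = exp (-(α * I)) := by
  simp [← exp_conj]

noncomputable def phaseMatrix (α : ℝ) : Matrix (Fin 2) (Fin 2) ℂ :=
  diagonal ![1, exp (α * I)]

theorem phaseMatrix_mul_mul_conjTranspose_apply_zero_one (α : ℝ) (M : Matrix (Fin 2) (Fin 2) ℂ) :
    (phaseMatrix α * M * (phaseMatrix α)ᴴ) 0 1 = M 0 1 * exp (-(α * I)) := by
  simp [phaseMatrix, conj_exp_ofReal_mul_I]

theorem jacobiRotation_eq_phaseMatrix_conj (φ α : ℝ) :
    jacobiRotation φ α = phaseMatrix α * jacobiRotation φ 0 * (phaseMatrix α)ᴴ := by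
  ext i j; fin_cases i <;> fin_cases j <;>
    simp [jacobiRotation, phaseMatrix, conj_exp_ofReal_mul_I, Complex.exp_neg] <;> field_simp

theorem phaseMatrix_conjTranspose_mul_mul_of_isHermitian {A : Matrix (Fin 2) (Fin 2) ℂ}
    (hA : A.IsHermitian) {α b : ℝ} (h10 : A 1 0 = b * exp (α * I)) :
    (phaseMatrix α)ᴴ * A * phaseMatrix α = !![((A 0 0).re : ℂ), b; b, (A 1 1).re] := by
  have h01 : A 0 1 = b * exp (-(α * I)) := by
    rw [← hA.apply 0 1, h10, star_mul', Complex.star_def, conj_exp_ofReal_mul_I, conj_ofReal]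
  have h00 : ((A 0 0).re : ℂ) = A 0 0 := hA.coe_re_apply_self 0
  have h11 : ((A 1 1).re : ℂ) = A 1 1 := hA.coe_re_apply_self 1
  ext i j; fin_cases i <;> fin_cases j <;>
    simp [phaseMatrix, h00, h01, h10, h11, conj_exp_ofReal_mul_I, Complex.exp_neg] <;> field_simp

theorem jacobiRotation_zero_conjTranspose_mul_mul_apply_zero_one (a b d φ : ℝ) :
    ((jacobiRotation φ 0)ᴴ * !![(a : ℂ), b; b, d] * jacobiRotation φ 0) 0 1 =
      ((b * Real.cos (2 * φ) - (a - d) / 2 * Real.sin (2 * φ) : ℝ) : ℂ) := by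
  simp [jacobiRotation, Matrix.mul_apply, Fin.sum_univ_two, Real.cos_two_mul', Real.sin_two_mul,
    -ofReal_cos, -ofReal_sin]
  ring

theorem jacobiRotation_annihilates_offdiagonal_general (A : Matrix (Fin 2) (Fin 2) ℂ)
    (hA : A.IsHermitian) (α : ℝ)
    (hα : Complex.exp ((α : ℂ) * Complex.I) = A 1 0 / ((‖A 1 0‖ : ℝ) : ℂ))
    (φ : ℝ)
    (htan : 2 * ‖A 1 0‖ * Real.cos (2 * φ) =
      ((A 0 0).re - (A 1 1).re) * Real.sin (2 * φ)) :
    ((jacobiRotation φ α)ᴴ * A * jacobiRotation φ α) 0 1 = 0 ∧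
    ((jacobiRotation φ α)ᴴ * A * jacobiRotation φ α) 1 0 = 0 := by
  have h10 : A 1 0 = ‖A 1 0‖ * exp (α * I) := by rw [hα, ofReal_norm_mul_div_norm]
  have h01 : ((jacobiRotation φ α)ᴴ * A * jacobiRotation φ α) 0 1 = 0 := by
    rw [jacobiRotation_eq_phaseMatrix_conj, conjTranspose_conj_mul_mul_conj,
      phaseMatrix_mul_mul_conjTranspose_apply_zero_one,
      phaseMatrix_conjTranspose_mul_mul_of_isHermitian hA h10,
      jacobiRotation_zero_conjTranspose_mul_mul_apply_zero_one]
    have hreal : ‖A 1 0‖ * Real.cos (2 * φ) -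
        ((A 0 0).re - (A 1 1).re) / 2 * Real.sin (2 * φ) = 0 := by linarith
    rw [hreal, ofReal_zero, zero_mul]
  exact ⟨h01, by rw [← (isHermitian_conjTranspose_mul_mul _ hA).apply 1 0, h01, star_zero]⟩

theorem jacobiRotation_annihilates_offdiagonal (A : Matrix (Fin 2) (Fin 2) ℂ)
    (hA : A.IsHermitian) (h21 : A 1 0 ≠ 0) (α : ℝ)
    (hα : Complex.exp ((α : ℂ) * Complex.I) = A 1 0 / ((‖A 1 0‖ : ℝ) : ℂ))
    (φ : ℝ) (hφ : φ ∈ Set.Icc (-(π / 4)) (π / 4))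
    (htan : 2 * ‖A 1 0‖ * Real.cos (2 * φ) =
      ((A 0 0).re - (A 1 1).re) * Real.sin (2 * φ)) :
    ((jacobiRotation φ α)ᴴ * A * jacobiRotation φ α) 0 1 = 0 ∧
    ((jacobiRotation φ α)ᴴ * A * jacobiRotation φ α) 1 0 = 0 :=
  jacobiRotation_annihilates_offdiagonal_general A hA α hα φ htan
end

section
/- Let δ⁻, δ⁺, δ be real numbers with 0 < δ⁻ < 1 < δ⁺ and δ⁻ ≤ δ ≤ δ⁺, and let t be any real number. Define ε₆ = (t²/(t² + 1)) · (δ² − 1). Then δ²·t² + 1 = (t² + 1)·(1 + ε₆), and (δ⁻)² − 1 < ε₆ < (δ⁺)² − 1, and δ⁻ < √(1 + ε₆) < δ⁺. -/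
/-!
With `s = t² / (t² + 1) ∈ [0, 1)`, the quantity `1 + ε₆ = (1 - s) · 1 + s · δ²` is a convex
combination of `1` and `δ²` giving positive weight to `1`. Since `δ⁻² < 1 < δ⁺²` and
`δ⁻² ≤ δ² ≤ δ⁺²`, it lies strictly between `δ⁻²` and `δ⁺²`; taking square roots gives the rest.
-/

lemma sq_div_sq_add_one_lt_one (t : ℝ) : t ^ 2 / (t ^ 2 + 1) < 1 :=
  (div_lt_one (by positivity)).2 (lt_add_one _)

lemma lt_one_add_mul_sub_one {a x s : ℝ} (hs₀ : 0 ≤ s) (hs₁ : s < 1) (ha : a < 1) (hax : a ≤ x) :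
    a < 1 + s * (x - 1) := by
  have : 0 < (1 - s) * (1 - a) + s * (x - a) := by
    have := mul_pos (sub_pos.2 hs₁) (sub_pos.2 ha)
    have := mul_nonneg hs₀ (sub_nonneg.2 hax)
    linarith
  linarith

lemma one_add_mul_sub_one_lt {b x s : ℝ} (hs₀ : 0 ≤ s) (hs₁ : s < 1) (hb : 1 < b) (hxb : x ≤ b) :
    1 + s * (x - 1) < b := by
  have : 0 < (1 - s) * (b - 1) + s * (b - x) := by
    have := mul_pos (sub_pos.2 hs₁) (sub_pos.2 hb)
    have := mul_nonneg hs₀ (sub_nonneg.2 hxb)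
    linarith
  linarith

theorem epsilon_six_bounds (dm dp d t : ℝ) (hdm0 : 0 < dm) (hdm : dm < 1) (hdp : 1 < dp)
    (hd₁ : dm ≤ d) (hd₂ : d ≤ dp) :
    d ^ 2 * t ^ 2 + 1 = (t ^ 2 + 1) * (1 + t ^ 2 / (t ^ 2 + 1) * (d ^ 2 - 1)) ∧
    dm ^ 2 - 1 < t ^ 2 / (t ^ 2 + 1) * (d ^ 2 - 1) ∧
    t ^ 2 / (t ^ 2 + 1) * (d ^ 2 - 1) < dp ^ 2 - 1 ∧
    dm < Real.sqrt (1 + t ^ 2 / (t ^ 2 + 1) * (d ^ 2 - 1)) ∧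
    Real.sqrt (1 + t ^ 2 / (t ^ 2 + 1) * (d ^ 2 - 1)) < dp := by
  have hs₀ : 0 ≤ t ^ 2 / (t ^ 2 + 1) := by positivity
  have hs₁ := sq_div_sq_add_one_lt_one t
  have hlo : dm ^ 2 < 1 + t ^ 2 / (t ^ 2 + 1) * (d ^ 2 - 1) :=
    lt_one_add_mul_sub_one hs₀ hs₁ (pow_lt_one₀ hdm0.le hdm two_ne_zero)
      (pow_le_pow_left₀ hdm0.le hd₁ 2)
  have hhi : 1 + t ^ 2 / (t ^ 2 + 1) * (d ^ 2 - 1) < dp ^ 2 :=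
    one_add_mul_sub_one_lt hs₀ hs₁ (one_lt_pow₀ hdp two_ne_zero)
      (pow_le_pow_left₀ (hdm0.le.trans hd₁) hd₂ 2)
  refine ⟨by field_simp; ring, by linarith, by linarith, (Real.lt_sqrt hdm0.le).2 hlo,
    (Real.sqrt_lt' (zero_lt_one.trans hdp)).2 hhi⟩
end

section
/- Let ε be a real number with 0 < ε < 1, let β ∈ {1, 2}, and let δ₂, ε₈, ε₉, ε₁₀ be real numbers such that (1 − ε)^β/(1 + ε) ≤ δ₂ ≤ (1 + ε)^β/(1 − ε), ((1 − ε)^β/(1 + ε))·(1 − ε) < 1 + ε₈ < ((1 + ε)^β/(1 − ε))·(1 + ε), |ε₉| ≤ ε, and |ε₁₀| ≤ ε. Then δ_t = δ₂ · (1 + ε₁₀) / ((1 + ε₈)·(1 + ε₉)) satisfies (1 − ε)^{β+2}/(1 + ε)^{β+3} < δ_t < (1 + ε)^{β+2}/(1 − ε)^{β+3}. -/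
/-!
Write `L = (1 - ε)^β / (1 + ε)` and `U = (1 + ε)^β / (1 - ε)`. The numerator `δ₂ (1 + ε₁₀)` lies
in `[L (1 - ε), U (1 + ε)]` and the denominator `(1 + ε₈)(1 + ε₉)` lies strictly inside
`(L (1 - ε)², U (1 + ε)²)`, all of these positive, so `δ_t` lies strictly between
`L (1 - ε) / (U (1 + ε)²)` and `U (1 + ε) / (L (1 - ε)²)`, which simplify to the stated powers.
-/

theorem pow_div_mul_div_pow_div_mul_mul {K : Type*} [Field K] {a b : K} (hb : b ≠ 0) (n : ℕ) :
    a ^ n / b * a / (b ^ n / a * b * b) = a ^ (n + 2) / b ^ (n + 3) := by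
  field_simp
  ring

theorem delta_t_bounds_general (ε : ℝ) (hε : 0 < ε) (hε1 : ε < 1) (β : ℕ)
    (δ₂ ε₈ ε₉ ε₁₀ : ℝ)
    (hδ₂l : (1 - ε) ^ β / (1 + ε) ≤ δ₂) (hδ₂u : δ₂ ≤ (1 + ε) ^ β / (1 - ε))
    (hε₈l : (1 - ε) ^ β / (1 + ε) * (1 - ε) < 1 + ε₈)
    (hε₈u : 1 + ε₈ < (1 + ε) ^ β / (1 - ε) * (1 + ε))
    (hε₉ : |ε₉| ≤ ε) (hε₁₀ : |ε₁₀| ≤ ε) :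
    (1 - ε) ^ (β + 2) / (1 + ε) ^ (β + 3) < δ₂ * (1 + ε₁₀) / ((1 + ε₈) * (1 + ε₉)) ∧
    δ₂ * (1 + ε₁₀) / ((1 + ε₈) * (1 + ε₉)) < (1 + ε) ^ (β + 2) / (1 - ε) ^ (β + 3) := by
  have hm : 0 < 1 - ε := by linarith
  have hp : 0 < 1 + ε := by linarith
  obtain ⟨h9l, h9u⟩ := abs_le.mp hε₉
  obtain ⟨h10l, h10u⟩ := abs_le.mp hε₁₀
  set L := (1 - ε) ^ β / (1 + ε)
  set U := (1 + ε) ^ β / (1 - ε)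
  have hL : 0 < L := div_pos (pow_pos hm β) hp
  have hU : 0 < U := div_pos (pow_pos hp β) hm
  have hN_lo : L * (1 - ε) ≤ δ₂ * (1 + ε₁₀) :=
    mul_le_mul hδ₂l (by linarith) hm.le (hL.le.trans hδ₂l)
  have hN_hi : δ₂ * (1 + ε₁₀) ≤ U * (1 + ε) := mul_le_mul hδ₂u (by linarith) (by linarith) hU.le
  have hD_lo : L * (1 - ε) * (1 - ε) < (1 + ε₈) * (1 + ε₉) :=
    mul_lt_mul hε₈l (by linarith) hm ((mul_pos hL hm).trans hε₈l).le
  have hD_hi : (1 + ε₈) * (1 + ε₉) < U * (1 + ε) * (1 + ε) :=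
    mul_lt_mul hε₈u (by linarith) (by linarith) (mul_pos hU hp).le
  have hLm : 0 < L * (1 - ε) * (1 - ε) := by positivity
  constructor
  · rw [← pow_div_mul_div_pow_div_mul_mul hp.ne']
    exact div_lt_div₀' hN_lo hD_hi ((mul_pos hL hm).trans_le hN_lo) (hLm.trans hD_lo)
  · rw [← pow_div_mul_div_pow_div_mul_mul hm.ne']
    exact div_lt_div₀' hN_hi hD_lo (mul_pos hU hp) hLm

theorem delta_t_bounds (ε : ℝ) (hε : 0 < ε) (hε1 : ε < 1) (β : ℕ) (hβ : β = 1 ∨ β = 2)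
    (δ₂ ε₈ ε₉ ε₁₀ : ℝ)
    (hδ₂l : (1 - ε) ^ β / (1 + ε) ≤ δ₂) (hδ₂u : δ₂ ≤ (1 + ε) ^ β / (1 - ε))
    (hε₈l : (1 - ε) ^ β / (1 + ε) * (1 - ε) < 1 + ε₈)
    (hε₈u : 1 + ε₈ < (1 + ε) ^ β / (1 - ε) * (1 + ε))
    (hε₉ : |ε₉| ≤ ε) (hε₁₀ : |ε₁₀| ≤ ε) :
    (1 - ε) ^ (β + 2) / (1 + ε) ^ (β + 3) < δ₂ * (1 + ε₁₀) / ((1 + ε₈) * (1 + ε₉)) ∧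
    δ₂ * (1 + ε₁₀) / ((1 + ε₈) * (1 + ε₉)) < (1 + ε) ^ (β + 2) / (1 - ε) ^ (β + 3) :=
  delta_t_bounds_general ε hε hε1 β δ₂ ε₈ ε₉ ε₁₀ hδ₂l hδ₂u hε₈l hε₈u hε₉ hε₁₀
end

section
/- Let ε be a real number with 0 < ε ≤ 2^{−24} and let β ∈ {1, 2}. Define δ_t⁺ = (1 + ε)^{β+2}/(1 − ε)^{β+3}, δ_t⁻ = (1 − ε)^{β+2}/(1 + ε)^{β+3}, δ_q⁺ = √(((δ_t⁺)² + 1)/2)·√(1 + ε), δ_q⁻ = √(((δ_t⁻)² + 1)/2)·√(1 − ε), δ_c⁻ = (1 − ε)/δ_q⁺, and δ_c⁺ = (1 + ε)/δ_q⁻. Then 1 − 6.00000017·ε < δ_c⁻ and δ_c⁺ ≤ 1 + 6·ε. -/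
set_option maxHeartbeats 2000000 in
theorem cosine_worst_case_bounds (ε : ℝ) (hε : 0 < ε) (hε1 : ε ≤ 2 ^ (-24 : ℤ))
    (β : ℕ) (hβ : β = 1 ∨ β = 2) :
    1 - 6.00000017 * ε <
      (1 - ε) / (Real.sqrt ((((1 + ε) ^ (β + 2) / (1 - ε) ^ (β + 3)) ^ 2 + 1) / 2) *
        Real.sqrt (1 + ε)) ∧
    (1 + ε) / (Real.sqrt ((((1 - ε) ^ (β + 2) / (1 + ε) ^ (β + 3)) ^ 2 + 1) / 2) *
        Real.sqrt (1 - ε)) ≤ 1 + 6 * ε := by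
  have hu : ε ≤ 1/16777216 := by
    rw [show ((2:ℝ)) ^ (-24 : ℤ) = 1/16777216 by norm_num] at hε1; exact hε1
  have h1 : (0:ℝ) < 1 - ε := by nlinarith
  have h2 : (0:ℝ) < 1 + ε := by linarith
  constructor
  · -- lower bound on δc⁻
    set t : ℝ := (1 + ε) ^ (β + 2) / (1 - ε) ^ (β + 3) with ht
    have ht2 : t ^ 2 ≤ 1 + 18*ε + 163.01*ε^2 := by
      rw [ht, div_pow, div_le_iff₀ (by positivity)]
      rcases hβ with h | h <;> subst h
      · have : (1+ε)^6 ≤ (1+18*ε+163.01*ε^2)*(1-ε)^8 := by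
          nlinarith [pow_pos hε 3, pow_pos hε 4, pow_pos hε 5, sq_nonneg ε,
            mul_pos hε hε, sq_nonneg (ε^2), sq_nonneg (ε^3), sq_nonneg (ε^4), sq_nonneg (ε^5)]
        calc ((1+ε)^(1+2))^2 = (1+ε)^6 := by ring
          _ ≤ (1+18*ε+163.01*ε^2)*(1-ε)^8 := this
          _ = (1+18*ε+163.01*ε^2)*((1-ε)^(1+3))^2 := by ring
      · have p8 : (1+ε)^8 ≤ 1+8*ε+28*ε^2+57*ε^3 := by
          nlinarith [pow_pos hε 2, pow_pos hε 3, pow_pos hε 4, sq_nonneg ε,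
            sq_nonneg (ε^2), sq_nonneg (ε^3), mul_pos hε hε]
        have q10 : 1-10*ε+45*ε^2-120*ε^3 ≤ (1-ε)^10 := by
          nlinarith [sq_nonneg ε, sq_nonneg (ε^2), sq_nonneg (ε^3), sq_nonneg (ε^4),
            mul_pos hε hε, pow_pos hε 3, pow_pos hε 4]
        have mid : 1+8*ε+28*ε^2+57*ε^3 ≤ (1+18*ε+163.01*ε^2)*(1-10*ε+45*ε^2-120*ε^3) := by
          nlinarith [pow_pos hε 3, pow_pos hε 4, pow_pos hε 5, sq_nonneg ε, mul_pos hε hε]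
        have hK : (0:ℝ) ≤ 1+18*ε+163.01*ε^2 := by positivity
        have last := mul_le_mul_of_nonneg_left q10 hK
        calc ((1+ε)^(2+2))^2 = (1+ε)^8 := by ring
          _ ≤ 1+8*ε+28*ε^2+57*ε^3 := p8
          _ ≤ (1+18*ε+163.01*ε^2)*(1-10*ε+45*ε^2-120*ε^3) := mid
          _ ≤ (1+18*ε+163.01*ε^2)*(1-ε)^10 := last
          _ = (1+18*ε+163.01*ε^2)*((1-ε)^(2+3))^2 := by ring
    have hA : Real.sqrt ((t ^ 2 + 1) / 2) ≤ 1+4.5*ε+30.63*ε^2 := by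
      have hs : (t ^ 2 + 1) / 2 ≤ (1+4.5*ε+30.63*ε^2)^2 := by
        nlinarith [pow_pos hε 3, pow_pos hε 4, sq_nonneg ε]
      calc Real.sqrt ((t ^ 2 + 1) / 2) ≤ Real.sqrt ((1+4.5*ε+30.63*ε^2)^2) :=
            Real.sqrt_le_sqrt hs
        _ = 1+4.5*ε+30.63*ε^2 := Real.sqrt_sq (by positivity)
    have hB : Real.sqrt (1 + ε) ≤ 1+0.5*ε-0.12*ε^2 := by
      have hnn : (0:ℝ) ≤ 1+0.5*ε-0.12*ε^2 := by nlinarith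
      have hs : 1 + ε ≤ (1+0.5*ε-0.12*ε^2)^2 := by
        nlinarith [pow_pos hε 3, pow_pos hε 4, sq_nonneg ε]
      calc Real.sqrt (1 + ε) ≤ Real.sqrt ((1+0.5*ε-0.12*ε^2)^2) := Real.sqrt_le_sqrt hs
        _ = 1+0.5*ε-0.12*ε^2 := Real.sqrt_sq hnn
    have hA0 : 0 < Real.sqrt ((t ^ 2 + 1) / 2) := Real.sqrt_pos.mpr (by positivity)
    have hB0 : 0 < Real.sqrt (1 + ε) := Real.sqrt_pos.mpr h2
    rw [lt_div_iff₀ (mul_pos hA0 hB0)]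
    have hc : (0:ℝ) ≤ 1 - 6.00000017 * ε := by nlinarith
    calc (1 - 6.00000017 * ε) * (Real.sqrt ((t ^ 2 + 1) / 2) * Real.sqrt (1 + ε))
        ≤ (1 - 6.00000017 * ε) * ((1+4.5*ε+30.63*ε^2) * (1+0.5*ε-0.12*ε^2)) := by
          apply mul_le_mul_of_nonneg_left _ hc
          exact mul_le_mul hA hB hB0.le (by positivity)
      _ < 1 - ε := by
          have key : (0:ℝ) < 0.00000017 - 2.7599991*ε := by nlinarith
          nlinarith [mul_pos hε key, pow_pos hε 3, pow_pos hε 4, pow_pos hε 5, mul_pos hε hε]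
  · -- upper bound on δc⁺
    set t : ℝ := (1 - ε) ^ (β + 2) / (1 + ε) ^ (β + 3) with ht
    have ht2 : 1 - 18*ε + 162.9*ε^2 ≤ t ^ 2 := by
      rw [ht, div_pow, le_div_iff₀ (by positivity)]
      rcases hβ with h | h <;> subst h
      · have : (1-18*ε+162.9*ε^2)*(1+ε)^8 ≤ (1-ε)^6 := by
          nlinarith [pow_pos hε 3, pow_pos hε 4, pow_pos hε 5, sq_nonneg ε,
            mul_pos hε hε, sq_nonneg (ε^2), sq_nonneg (ε^3), sq_nonneg (ε^4), sq_nonneg (ε^5)]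
        calc (1-18*ε+162.9*ε^2)*((1+ε)^(1+3))^2 = (1-18*ε+162.9*ε^2)*(1+ε)^8 := by ring
          _ ≤ (1-ε)^6 := this
          _ = ((1-ε)^(1+2))^2 := by ring
      · have p8 : 1-8*ε+28*ε^2-57*ε^3 ≤ (1-ε)^8 := by
          nlinarith [sq_nonneg ε, sq_nonneg (ε^2), sq_nonneg (ε^3), mul_pos hε hε,
            pow_pos hε 3, pow_pos hε 4]
        have q10 : (1+ε)^10 ≤ 1+10*ε+45*ε^2+121*ε^3 := by
          have h3 : ε^3 ≤ ε^2/16777216 := by nlinarith [sq_nonneg ε]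
          have h4 : ε^4 ≤ ε^3/16777216 := by nlinarith [pow_pos hε 3]
          have h5 : ε^5 ≤ ε^4/16777216 := by nlinarith [pow_pos hε 4]
          have h6 : ε^6 ≤ ε^5/16777216 := by nlinarith [pow_pos hε 5]
          have h7 : ε^7 ≤ ε^6/16777216 := by nlinarith [pow_pos hε 6]
          have h8 : ε^8 ≤ ε^7/16777216 := by nlinarith [pow_pos hε 7]
          have h9 : ε^9 ≤ ε^8/16777216 := by nlinarith [pow_pos hε 8]
          have h10 : ε^10 ≤ ε^9/16777216 := by nlinarith [pow_pos hε 9]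
          nlinarith [pow_pos hε 3, pow_pos hε 4]
        have mid : (1-18*ε+162.9*ε^2)*(1+10*ε+45*ε^2+121*ε^3) ≤ 1-8*ε+28*ε^2-57*ε^3 := by
          nlinarith [pow_pos hε 3, pow_pos hε 4, pow_pos hε 5, sq_nonneg ε, mul_pos hε hε]
        have hK : (0:ℝ) ≤ 1-18*ε+162.9*ε^2 := by nlinarith
        have first := mul_le_mul_of_nonneg_left q10 hK
        calc (1-18*ε+162.9*ε^2)*((1+ε)^(2+3))^2 = (1-18*ε+162.9*ε^2)*(1+ε)^10 := by ring
          _ ≤ (1-18*ε+162.9*ε^2)*(1+10*ε+45*ε^2+121*ε^3) := first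
          _ ≤ 1-8*ε+28*ε^2-57*ε^3 := mid
          _ ≤ (1-ε)^8 := p8
          _ = ((1-ε)^(2+2))^2 := by ring
    have hA : 1-4.5*ε+30.6*ε^2 ≤ Real.sqrt ((t ^ 2 + 1) / 2) := by
      have hnn : (0:ℝ) ≤ 1-4.5*ε+30.6*ε^2 := by nlinarith
      apply (Real.le_sqrt hnn (by positivity)).mpr
      nlinarith [pow_pos hε 3, pow_pos hε 4, sq_nonneg ε]
    have hB : 1-0.5*ε-0.13*ε^2 ≤ Real.sqrt (1 - ε) := by
      have hnn : (0:ℝ) ≤ 1-0.5*ε-0.13*ε^2 := by nlinarith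
      apply (Real.le_sqrt hnn h1.le).mpr
      nlinarith [pow_pos hε 3, pow_pos hε 4, sq_nonneg ε]
    have hA0 : 0 < Real.sqrt ((t ^ 2 + 1) / 2) := Real.sqrt_pos.mpr (by positivity)
    have hB0 : 0 < Real.sqrt (1 - ε) := Real.sqrt_pos.mpr h1
    rw [div_le_iff₀ (mul_pos hA0 hB0)]
    have hBnn : (0:ℝ) ≤ 1-0.5*ε-0.13*ε^2 := by nlinarith
    calc 1 + ε ≤ (1 + 6*ε) * ((1-4.5*ε+30.6*ε^2) * (1-0.5*ε-0.13*ε^2)) := by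
          nlinarith [pow_pos hε 3, pow_pos hε 4, pow_pos hε 5, mul_pos hε hε, sq_nonneg ε]
      _ ≤ (1 + 6*ε) * (Real.sqrt ((t ^ 2 + 1) / 2) * Real.sqrt (1 - ε)) := by
          apply mul_le_mul_of_nonneg_left _ (by linarith)
          exact mul_le_mul hA hB hBnn hA0.le
end

section
/- Let ε be a real number with 0 < ε ≤ 2^{−24} and let β ∈ {1, 2}. Define δ_t⁺ = (1 + ε)^{β+2}/(1 − ε)^{β+3}, δ_t⁻ = (1 − ε)^{β+2}/(1 + ε)^{β+3}, δ_q⁺ = √(((δ_t⁺)² + 1)/2)·√(1 + ε), δ_q⁻ = √(((δ_t⁻)² + 1)/2)·√(1 − ε), δ_c⁻ = (1 − ε)/δ_q⁺, δ_c⁺ = (1 + ε)/δ_q⁻, δ₂₁⁻ = ((1 − ε)/(1 + ε))^{β−1} · δ_t⁻ · δ_c⁻ · (1 − ε)^β, and δ₂₁⁺ = ((1 + ε)/(1 − ε))^{β−1} · δ_t⁺ · δ_c⁺ · (1 + ε)^β. Then 1 − 19·ε ≤ δ₂₁⁻ and δ₂₁⁺ ≤ 1 + 19.00000950·ε. -/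
/-!
Squaring removes the square roots: for `β ≥ 1`, `x = 1 ∓ ε` and `y = 1 ± ε` the factor `δ₂₁`
has square `2 x ^ (8β + 10) / (y ^ (4β + 5) (y ^ (2β + 4) + x ^ (2β + 6)))`, so each bound becomes
a polynomial inequality in `ε`. For `β = 2` the lower one is tight to first order
(`δ₂₁⁻ = 1 - 19ε + O(ε²)`) and the upper one has first-order slack of only `0.0000095 ε`; both
are settled by bounding every higher power `ε ^ (m + k)` by `ε ^ m (2 ^ (-24)) ^ k`, after which
they are linear in the remaining monomials.
-/

/-- `δ₂₁⁻ = offdiagFactor (1 - ε) (1 + ε) β` and `δ₂₁⁺ = offdiagFactor (1 + ε) (1 - ε) β`. -/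
noncomputable def offdiagFactor (x y : ℝ) (β : ℕ) : ℝ :=
  (x / y) ^ (β - 1) * (x ^ (β + 2) / y ^ (β + 3)) *
    (x / (Real.sqrt (((y ^ (β + 2) / x ^ (β + 3)) ^ 2 + 1) / 2) * Real.sqrt y)) * x ^ β

section OffdiagFactor

variable {x y c : ℝ} {β : ℕ}

lemma offdiagFactor_nonneg (hx : 0 ≤ x) (hy : 0 ≤ y) : 0 ≤ offdiagFactor x y β := by
  unfold offdiagFactor
  positivity

lemma offdiagFactor_sq (hx : 0 < x) (hy : 0 < y) (hβ : 1 ≤ β) :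
    offdiagFactor x y β ^ 2 =
      2 * x ^ (8 * β + 10) / (y ^ (4 * β + 5) * (y ^ (2 * β + 4) + x ^ (2 * β + 6))) := by
  obtain ⟨n, rfl⟩ := Nat.exists_eq_add_of_le' hβ
  unfold offdiagFactor
  simp only [Nat.add_sub_cancel, mul_pow, div_pow]
  rw [Real.sq_sqrt (by positivity), Real.sq_sqrt hy.le]
  field_simp
  ring

lemma le_offdiagFactor (hx : 0 < x) (hy : 0 < y) (hβ : 1 ≤ β) (hc : 0 ≤ c)
    (h : c ^ 2 * (y ^ (4 * β + 5) * (y ^ (2 * β + 4) + x ^ (2 * β + 6))) ≤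
      2 * x ^ (8 * β + 10)) :
    c ≤ offdiagFactor x y β := by
  rw [← pow_le_pow_iff_left₀ hc (offdiagFactor_nonneg hx.le hy.le) two_ne_zero,
    offdiagFactor_sq hx hy hβ, le_div_iff₀ (by positivity)]
  exact h

lemma offdiagFactor_le (hx : 0 < x) (hy : 0 < y) (hβ : 1 ≤ β) (hc : 0 ≤ c)
    (h : 2 * x ^ (8 * β + 10) ≤
      c ^ 2 * (y ^ (4 * β + 5) * (y ^ (2 * β + 4) + x ^ (2 * β + 6)))) :
    offdiagFactor x y β ≤ c := by
  rw [← pow_le_pow_iff_left₀ (offdiagFactor_nonneg hx.le hy.le) hc two_ne_zero,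
    offdiagFactor_sq hx hy hβ, div_le_iff₀ (by positivity)]
  exact h

end OffdiagFactor

/-- Stated with a product rather than `ε ^ (m + k)` so that `linarith` sees numeral exponents. -/
lemma pow_mul_pow_nonneg_and_le {ε u : ℝ} (h0 : 0 ≤ ε) (h : ε ≤ u) (m k : ℕ) :
    0 ≤ ε ^ m * ε ^ k ∧ ε ^ m * ε ^ k ≤ ε ^ m * u ^ k :=
  ⟨by positivity, mul_le_mul_of_nonneg_left (pow_le_pow_left₀ h0 h k) (pow_nonneg h0 m)⟩

section Polynomial

variable {ε : ℝ} {β : ℕ}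

lemma poly_lower_bound (h0 : 0 ≤ ε) (hu : ε ≤ 1 / 2 ^ 24) (hβ : β = 1 ∨ β = 2) :
    (1 - 19 * ε) ^ 2 *
        ((1 + ε) ^ (4 * β + 5) * ((1 + ε) ^ (2 * β + 4) + (1 - ε) ^ (2 * β + 6))) ≤
      2 * (1 - ε) ^ (8 * β + 10) := by
  have tail := pow_mul_pow_nonneg_and_le h0 hu
  rcases hβ with rfl | rfl <;> norm_num only
  · linarith [tail 1 1, tail 1 2, tail 1 3, tail 1 4, tail 1 5, tail 1 6, tail 1 7, tail 1 8,
      tail 1 9, tail 1 10, tail 1 11, tail 1 12, tail 1 13, tail 1 14, tail 1 15, tail 1 16,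
      tail 1 17, tail 1 18]
  · linarith [tail 2 0, tail 2 1, tail 2 2, tail 2 3, tail 2 4, tail 2 5, tail 2 6, tail 2 7,
      tail 2 8, tail 2 9, tail 2 10, tail 2 11, tail 2 12, tail 2 13, tail 2 14, tail 2 15,
      tail 2 16, tail 2 17, tail 2 18, tail 2 19, tail 2 20, tail 2 21, tail 2 22, tail 2 23,
      tail 2 24]

lemma poly_upper_bound (h0 : 0 ≤ ε) (hu : ε ≤ 1 / 2 ^ 24) (hβ : β = 1 ∨ β = 2) :
    2 * (1 + ε) ^ (8 * β + 10) ≤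
      (1 + 19.00000950 * ε) ^ 2 *
        ((1 - ε) ^ (4 * β + 5) * ((1 - ε) ^ (2 * β + 4) + (1 + ε) ^ (2 * β + 6))) := by
  have tail := pow_mul_pow_nonneg_and_le h0 hu
  rcases hβ with rfl | rfl <;> norm_num only
  · linarith [tail 1 1, tail 1 2, tail 1 3, tail 1 4, tail 1 5, tail 1 6, tail 1 7, tail 1 8,
      tail 1 9, tail 1 10, tail 1 11, tail 1 12, tail 1 13, tail 1 14, tail 1 15, tail 1 16,
      tail 1 17, tail 1 18]
  · linarith [tail 1 1, tail 1 2, tail 1 3, tail 1 4, tail 1 5, tail 1 6, tail 1 7, tail 1 8,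
      tail 1 9, tail 1 10, tail 1 11, tail 1 12, tail 1 13, tail 1 14, tail 1 15, tail 1 16,
      tail 1 17, tail 1 18, tail 1 19, tail 1 20, tail 1 21, tail 1 22, tail 1 23, tail 1 24,
      tail 1 25]

end Polynomial

theorem offdiagonal_worst_case_bounds (ε : ℝ) (hε : 0 < ε) (hε1 : ε ≤ 2 ^ (-24 : ℤ))
    (β : ℕ) (hβ : β = 1 ∨ β = 2) :
    1 - 19 * ε ≤
      ((1 - ε) / (1 + ε)) ^ (β - 1) * ((1 - ε) ^ (β + 2) / (1 + ε) ^ (β + 3)) *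
        ((1 - ε) / (Real.sqrt ((((1 + ε) ^ (β + 2) / (1 - ε) ^ (β + 3)) ^ 2 + 1) / 2) *
          Real.sqrt (1 + ε))) * (1 - ε) ^ β ∧
    ((1 + ε) / (1 - ε)) ^ (β - 1) * ((1 + ε) ^ (β + 2) / (1 - ε) ^ (β + 3)) *
        ((1 + ε) / (Real.sqrt ((((1 - ε) ^ (β + 2) / (1 + ε) ^ (β + 3)) ^ 2 + 1) / 2) *
          Real.sqrt (1 - ε))) * (1 + ε) ^ β ≤ 1 + 19.00000950 * ε := by
  change 1 - 19 * ε ≤ offdiagFactor (1 - ε) (1 + ε) β ∧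
    offdiagFactor (1 + ε) (1 - ε) β ≤ 1 + 19.00000950 * ε
  have hsmall : ε ≤ 1 / 2 ^ 24 := by simpa [zpow_neg] using hε1
  have hβ1 : 1 ≤ β := by omega
  exact ⟨le_offdiagFactor (by linarith) (by linarith) hβ1 (by linarith)
      (poly_lower_bound hε.le hsmall hβ),
    offdiagFactor_le (by linarith) (by linarith) hβ1 (by linarith)
      (poly_upper_bound hε.le hsmall hβ)⟩
end
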